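/- arXiv:2511.02305 — 5 statements merged into one kernel-verified Lean document; each statement's English description precedes it below -/
import Mathlib

section
/- Let p and q be polynomials with complex coefficients such that every zero a₁,…,aₙ of q lies in the open unit disk 𝔻, set f = p/q and B(z) = ∏_{k=1}^{n} (z−a_k)/(1−conj(a_k)z). Then the restricted Liouville operator A_{f|B²H²} is densely defined: the set {B²g : g ∈ H²(𝔻), f·(B²g)′ extends to a function in H²(𝔻)} is dense, with respect to the H² norm, in the subspace B²H² = {B²g : g ∈ H²(𝔻)}. -/
open Complex Metric Polynomial

/-- The Blaschke factor with zero `a`. -/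
noncomputable def blaschkeF (a z : ℂ) : ℂ := (z - a) / (1 - (starRingEnd ℂ) a * z)

/-- The finite Blaschke product whose zeros are the roots of `q` (with multiplicity). -/
noncomputable def blaschkeProdP (q : Polynomial ℂ) (z : ℂ) : ℂ :=
  (q.roots.map (fun a => blaschkeF a z)).prod

/-- `g` is a member of the Hardy space `H²(𝔻)` with Taylor coefficient sequence `c`. -/
def IsHardy2 (g : ℂ → ℂ) (c : ℕ → ℂ) : Prop :=
  (∀ z ∈ Metric.ball (0 : ℂ) 1, HasSum (fun n => c n * z ^ n) (g z)) ∧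
  Summable (fun n => ‖c n‖ ^ 2)

/-! ### ℓ¹ analytic functions on the disk -/

/-- analytic on the disk with absolutely summable Taylor coefficients -/
def Ell1 (u : ℂ → ℂ) (b : ℕ → ℂ) : Prop :=
  (∀ z ∈ Metric.ball (0 : ℂ) 1, HasSum (fun n => b n * z ^ n) (u z)) ∧
  Summable (fun n => ‖b n‖)

lemma ell1_congr {u v : ℂ → ℂ} {b : ℕ → ℂ} (h : Ell1 u b) (huv : ∀ z, u z = v z) :
    Ell1 v b := ⟨fun z hz => (huv z) ▸ h.1 z hz, h.2⟩

lemma summable_norm_term {b : ℕ → ℂ} (hb : Summable fun n => ‖b n‖) {z : ℂ}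
    (hz : z ∈ Metric.ball (0 : ℂ) 1) : Summable fun n => ‖b n * z ^ n‖ := by
  refine Summable.of_nonneg_of_le (fun n => norm_nonneg _) (fun n => ?_) hb
  rw [norm_mul, norm_pow]
  have hz1 : ‖z‖ < 1 := by simpa using hz
  calc ‖b n‖ * ‖z‖ ^ n ≤ ‖b n‖ * 1 := by
        gcongr
        exact pow_le_one₀ (norm_nonneg z) hz1.le
    _ = ‖b n‖ := mul_one _

lemma ell1_poly (P : Polynomial ℂ) : Ell1 (fun z => P.eval z) (fun n => P.coeff n) := by
  have h1 : ∀ z ∈ Metric.ball (0 : ℂ) 1, HasSum (fun n => P.coeff n * z ^ n) (P.eval z) := by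
    intro z _
    rw [Polynomial.eval_eq_sum_range]
    exact hasSum_sum_of_ne_finset_zero fun n hn => by
      rw [Polynomial.coeff_eq_zero_of_natDegree_lt (by simpa using hn), zero_mul]
  have h2 : Summable fun n => ‖P.coeff n‖ :=
    summable_of_ne_finset_zero (s := Finset.range (P.natDegree + 1)) fun n hn => by
      rw [Polynomial.coeff_eq_zero_of_natDegree_lt (by simpa using hn), norm_zero]
  exact ⟨h1, h2⟩

lemma ell1_geom {a : ℂ} (ha : ‖a‖ < 1) :
    Ell1 (fun z => (1 - (starRingEnd ℂ) a * z)⁻¹) (fun n => ((starRingEnd ℂ) a) ^ n) := by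
  constructor
  · intro z hz
    have hz1 : ‖z‖ < 1 := by simpa using hz
    have hnorm : ‖(starRingEnd ℂ) a * z‖ < 1 := by
      rw [norm_mul, RCLike.norm_conj]
      calc ‖a‖ * ‖z‖ ≤ ‖a‖ * 1 := by gcongr
        _ = ‖a‖ := mul_one _
        _ < 1 := ha
    simpa [mul_pow] using hasSum_geometric_of_norm_lt_one hnorm
  · simpa [RCLike.norm_conj] using summable_geometric_of_lt_one (norm_nonneg a) ha

lemma ell1_mul {u v : ℂ → ℂ} {b c : ℕ → ℂ} (hu : Ell1 u b) (hv : Ell1 v c) :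
    Ell1 (fun z => u z * v z) (fun n => ∑ k ∈ Finset.range (n + 1), b k * c (n - k)) := by
  constructor
  · intro z hz
    have hf := summable_norm_term hu.2 hz
    have hg := summable_norm_term hv.2 hz
    have H := hasSum_sum_range_mul_of_summable_norm hf hg
    rw [(hu.1 z hz).tsum_eq, (hv.1 z hz).tsum_eq] at H
    convert H using 2 with n
    · rfl
    rw [Finset.sum_mul]
    refine Finset.sum_congr rfl fun k hk => ?_
    have hk' : k ≤ n := Nat.lt_succ_iff.mp (Finset.mem_range.mp hk)
    rw [mul_mul_mul_comm, ← pow_add, Nat.add_sub_cancel' hk']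
  · have key : Summable fun n => ∑ k ∈ Finset.range (n + 1), ‖b k‖ * ‖c (n - k)‖ := by
      have := summable_norm_sum_mul_range_of_summable_norm
        (f := fun n => ‖b n‖) (g := fun n => ‖c n‖)
        (by simpa using hu.2) (by simpa using hv.2)
      refine this.congr fun n => ?_
      exact Real.norm_of_nonneg (Finset.sum_nonneg fun k _ =>
        mul_nonneg (norm_nonneg _) (norm_nonneg _))
    refine Summable.of_nonneg_of_le (fun n => norm_nonneg _) (fun n => ?_) key
    calc ‖∑ k ∈ Finset.range (n + 1), b k * c (n - k)‖
        ≤ ∑ k ∈ Finset.range (n + 1), ‖b k * c (n - k)‖ := norm_sum_le _ _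
      _ = ∑ k ∈ Finset.range (n + 1), ‖b k‖ * ‖c (n - k)‖ := by simp [norm_mul]

lemma ell1_one : Ell1 (fun _ => (1 : ℂ)) (fun n => (1 : Polynomial ℂ).coeff n) :=
  ell1_congr (ell1_poly 1) (by simp)

lemma ell1_multiset_prod (s : Multiset ℂ) (u : ℂ → ℂ → ℂ)
    (hu : ∀ a ∈ s, ∃ b, Ell1 (u a) b) :
    ∃ b, Ell1 (fun z => (s.map (fun a => u a z)).prod) b := by
  induction s using Multiset.induction_on with
  | empty => exact ⟨_, ell1_congr ell1_one (by simp)⟩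
  | cons a s ih =>
    obtain ⟨b, hb⟩ := hu a (Multiset.mem_cons_self a s)
    obtain ⟨c, hc⟩ := ih fun x hx => hu x (Multiset.mem_cons_of_mem hx)
    exact ⟨_, ell1_congr (ell1_mul hb hc) (by simp)⟩

lemma norm_le_tsum_norm {b : ℕ → ℂ} (hb : Summable fun n => ‖b n‖) (n : ℕ) :
    ‖b n‖ ≤ ∑' k, ‖b k‖ :=
  Summable.le_tsum hb n fun _ _ => norm_nonneg _

lemma ell1_isHardy2 {u : ℂ → ℂ} {b : ℕ → ℂ} (h : Ell1 u b) : IsHardy2 u b := by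
  refine ⟨h.1, ?_⟩
  refine Summable.of_nonneg_of_le (fun n => sq_nonneg _) (fun n => ?_)
    (h.2.mul_left (∑' k, ‖b k‖))
  calc ‖b n‖ ^ 2 = ‖b n‖ * ‖b n‖ := pow_two _
    _ ≤ (∑' k, ‖b k‖) * ‖b n‖ :=
      mul_le_mul_of_nonneg_right (norm_le_tsum_norm h.2 n) (norm_nonneg _)

/-! ### the Young-type ℓ¹ * ℓ² bound -/

/-- Young-type bound: the Cauchy product of an ℓ¹ and an ℓ² sequence is ℓ². -/
lemma cauchy_l2 {b c : ℕ → ℂ} (hb : Summable fun n => ‖b n‖)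
    (hc : Summable fun n => ‖c n‖ ^ 2) :
    Summable (fun n => ‖∑ k ∈ Finset.range (n + 1), b k * c (n - k)‖ ^ 2) ∧
    ∑' n, ‖∑ k ∈ Finset.range (n + 1), b k * c (n - k)‖ ^ 2 ≤
      (∑' n, ‖b n‖) ^ 2 * ∑' n, ‖c n‖ ^ 2 := by
  set u : ℕ → ℝ := fun k => ‖b k‖ with hu
  set v : ℕ → ℝ := fun k => ‖c k‖ ^ 2 with hv
  set Cb : ℝ := ∑' n, u n with hCb
  set t : ℕ → ℝ := fun n => ∑ k ∈ Finset.range (n + 1), u k * v (n - k) with ht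
  have hpt : ∀ n, ‖∑ k ∈ Finset.range (n + 1), b k * c (n - k)‖ ^ 2 ≤ Cb * t n := by
    intro n
    have h1 : ‖∑ k ∈ Finset.range (n + 1), b k * c (n - k)‖ ≤
        ∑ k ∈ Finset.range (n + 1), u k * ‖c (n - k)‖ := by
      refine (norm_sum_le _ _).trans (le_of_eq ?_)
      exact Finset.sum_congr rfl fun k _ => norm_mul _ _
    have h2 : (∑ k ∈ Finset.range (n + 1), u k * ‖c (n - k)‖) ^ 2 ≤
        (∑ k ∈ Finset.range (n + 1), u k) * t n := by
      refine Finset.sum_sq_le_sum_mul_sum_of_sq_eq_mul _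
        (fun k _ => norm_nonneg _) (fun k _ => mul_nonneg (norm_nonneg _) (sq_nonneg _))
        (fun k _ => ?_)
      simp only [hu, hv]; ring
    have h3 : (∑ k ∈ Finset.range (n + 1), u k) * t n ≤ Cb * t n := by
      have ht0 : 0 ≤ t n := Finset.sum_nonneg fun k _ =>
        mul_nonneg (norm_nonneg _) (sq_nonneg _)
      exact mul_le_mul_of_nonneg_right (Summable.sum_le_tsum _ (fun k _ => norm_nonneg _) hb) ht0
    calc ‖∑ k ∈ Finset.range (n + 1), b k * c (n - k)‖ ^ 2
        ≤ (∑ k ∈ Finset.range (n + 1), u k * ‖c (n - k)‖) ^ 2 := by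
          apply pow_le_pow_left₀ (norm_nonneg _) h1
      _ ≤ (∑ k ∈ Finset.range (n + 1), u k) * t n := h2
      _ ≤ Cb * t n := h3
  have htsum : Summable t := by
    have := summable_norm_sum_mul_range_of_summable_norm (f := u) (g := v)
      (by simpa [hu] using hb) (by
        refine hc.congr fun n => ?_
        rw [Real.norm_of_nonneg (sq_nonneg _)])
    refine this.of_norm.congr fun n => rfl
  have htval : ∑' n, t n = Cb * ∑' n, v n := by
    have H := tsum_mul_tsum_eq_tsum_sum_range_of_summable_norm (f := u) (g := v)
      (by simpa [hu] using hb) (by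
        refine hc.congr fun n => ?_
        rw [Real.norm_of_nonneg (sq_nonneg _)])
    exact H.symm
  constructor
  · exact Summable.of_nonneg_of_le (fun n => sq_nonneg _) hpt (htsum.mul_left Cb)
  · calc ∑' n, ‖∑ k ∈ Finset.range (n + 1), b k * c (n - k)‖ ^ 2
        ≤ ∑' n, Cb * t n := Summable.tsum_le_tsum hpt
          (Summable.of_nonneg_of_le (fun n => sq_nonneg _) hpt (htsum.mul_left Cb))
          (htsum.mul_left Cb)
      _ = Cb * ∑' n, t n := tsum_mul_left
      _ = Cb * (Cb * ∑' n, v n) := by rw [htval]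
      _ = Cb ^ 2 * ∑' n, v n := by ring

/-! ### the denominator polynomial and the derivative identity -/

noncomputable def Dpoly (q : Polynomial ℂ) : Polynomial ℂ :=
  (q.roots.map (fun a => 1 - Polynomial.C ((starRingEnd ℂ) a) * X)).prod

lemma Dpoly_eval (q : Polynomial ℂ) (z : ℂ) :
    (Dpoly q).eval z = (q.roots.map (fun a => 1 - (starRingEnd ℂ) a * z)).prod := by
  rw [Dpoly, eval_multiset_prod, Multiset.map_map]
  congr 1
  ext a
  simp

lemma Dpoly_eval_ne_zero {q : Polynomial ℂ} (hroots : ∀ a ∈ q.roots, ‖a‖ < 1)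
    {z : ℂ} (hz : z ∈ Metric.ball (0 : ℂ) 1) : (Dpoly q).eval z ≠ 0 := by
  rw [Dpoly_eval]
  refine Multiset.prod_ne_zero ?_
  rw [Multiset.mem_map]
  rintro ⟨a, ha, hfa⟩
  have hz1 : ‖z‖ < 1 := by simpa using hz
  have : ‖(starRingEnd ℂ) a * z‖ < 1 := by
    rw [norm_mul, RCLike.norm_conj]
    calc ‖a‖ * ‖z‖ ≤ 1 * ‖z‖ := by gcongr; exact (hroots a ha).le
      _ = ‖z‖ := one_mul _
      _ < 1 := hz1
  have h1 : (starRingEnd ℂ) a * z ≠ 1 := by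
    intro h; rw [h] at this; simp at this
  exact (sub_ne_zero.mpr (Ne.symm h1)) hfa

lemma blaschke_form {q : Polynomial ℂ} (hq : q ≠ 0) (z : ℂ) :
    blaschkeProdP q z = q.eval z / (q.leadingCoeff * (Dpoly q).eval z) := by
  have hC : q.leadingCoeff ≠ 0 := leadingCoeff_ne_zero.mpr hq
  have hsplit := (IsAlgClosed.splits q).eq_prod_roots
  have hqz : q.eval z = q.leadingCoeff * (q.roots.map (fun a => z - a)).prod := by
    conv_lhs => rw [hsplit]
    rw [eval_mul, eval_C, eval_multiset_prod, Multiset.map_map]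
    congr 2
    ext a
    simp
  have hnum : (q.roots.map (fun a => z - a)).prod = q.eval z / q.leadingCoeff := by
    rw [hqz]; field_simp
  rw [blaschkeProdP]
  have : (q.roots.map (fun a => blaschkeF a z)).prod =
      (q.roots.map (fun a => z - a)).prod /
      (q.roots.map (fun a => 1 - (starRingEnd ℂ) a * z)).prod := by
    rw [← Multiset.prod_map_div]
    rfl
  rw [this, hnum, Dpoly_eval, div_div]

lemma deriv_identity {q : Polynomial ℂ} (hq : q ≠ 0) (p hN : Polynomial ℂ) {z : ℂ}
    (hD : (Dpoly q).eval z ≠ 0) (hqz : q.eval z ≠ 0) :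
    (Polynomial.C ((q.leadingCoeff ^ 2)⁻¹) *
        (p * (2 * q.derivative * hN * Dpoly q + q * hN.derivative * Dpoly q -
          2 * q * hN * (Dpoly q).derivative))).eval z * (((Dpoly q).eval z)⁻¹) ^ 3 =
      (p.eval z / q.eval z) * deriv (fun w => (blaschkeProdP q w) ^ 2 * hN.eval w) z := by
  have hC : q.leadingCoeff ≠ 0 := leadingCoeff_ne_zero.mpr hq
  set Np : Polynomial ℂ := q * q * hN with hNp
  set Dp : Polynomial ℂ := Polynomial.C (q.leadingCoeff ^ 2) * (Dpoly q) ^ 2 with hDp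
  have hfun : (fun w => (blaschkeProdP q w) ^ 2 * hN.eval w) =
      fun w => Np.eval w / Dp.eval w := by
    funext w
    rw [blaschke_form hq w]
    simp only [hNp, hDp, eval_mul, eval_pow, eval_C]
    ring
  have hDpz : Dp.eval z ≠ 0 := by
    simp only [hDp, eval_mul, eval_pow, eval_C]
    exact mul_ne_zero (pow_ne_zero _ hC) (pow_ne_zero _ hD)
  have hderiv : deriv (fun w => (blaschkeProdP q w) ^ 2 * hN.eval w) z =
      (Np.derivative.eval z * Dp.eval z - Np.eval z * Dp.derivative.eval z) /
        (Dp.eval z) ^ 2 := by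
    rw [hfun]
    exact ((Np.hasDerivAt z).div (Dp.hasDerivAt z) hDpz).deriv
  rw [hderiv]
  simp only [hNp, hDp, eval_mul, eval_pow, eval_C, eval_add, eval_sub, derivative_mul,
    derivative_C, derivative_pow, Polynomial.derivative_ofNat, zero_mul, add_zero, zero_add,
    eval_ofNat, eval_natCast, Nat.cast_ofNat, pow_one]
  field_simp
  ring

/-! ### the main theorem -/

/-- for `f = p/q` with all zeros of `q` in `𝔻` and `B` the associated
Blaschke product, the domain of the restricted Liouville operator
`{B²h : h ∈ H², f·(B²h)′ extends to H²}` is dense in `B²H²` in the `H²` norm. -/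
theorem stmt1 (p q : Polynomial ℂ) (hq : q ≠ 0)
    (hroots : ∀ a ∈ q.roots, ‖a‖ < 1)
    (g : ℂ → ℂ) (cg : ℕ → ℂ) (hg : IsHardy2 g cg)
    (ε : ℝ) (hε : 0 < ε) :
    ∃ (h : ℂ → ℂ) (ch : ℕ → ℂ), IsHardy2 h ch ∧
      (∃ (F : ℂ → ℂ) (cF : ℕ → ℂ), IsHardy2 F cF ∧
        ∀ z ∈ ball (0 : ℂ) 1, q.eval z ≠ 0 →
          F z = (p.eval z / q.eval z) *
            deriv (fun w => (blaschkeProdP q w) ^ 2 * h w) z) ∧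
      ∃ d : ℕ → ℂ,
        IsHardy2 (fun z => (blaschkeProdP q z) ^ 2 * (g z - h z)) d ∧
        Real.sqrt (∑' n, ‖d n‖ ^ 2) < ε := by
  classical
  obtain ⟨hgsum, hgsq⟩ := hg
  -- Step 1 : ℓ¹ Taylor coefficients for B²
  have hBF2 : ∀ a ∈ q.roots, ∃ b, Ell1 (fun z => blaschkeF a z * blaschkeF a z) b := by
    intro a ha
    have ha1 : ‖a‖ < 1 := hroots a ha
    have h1 : Ell1 (fun z => blaschkeF a z)
        (fun n => ∑ k ∈ Finset.range (n + 1),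
          (X - Polynomial.C a).coeff k * ((starRingEnd ℂ) a) ^ (n - k)) := by
      refine ell1_congr (ell1_mul (ell1_poly (X - Polynomial.C a)) (ell1_geom ha1))
        fun z => ?_
      rw [blaschkeF, div_eq_mul_inv]
      simp
    exact ⟨_, ell1_mul h1 h1⟩
  obtain ⟨bB, hbB⟩ : ∃ b, Ell1 (fun z => (blaschkeProdP q z) ^ 2) b := by
    obtain ⟨b, hb⟩ := ell1_multiset_prod q.roots
      (fun a z => blaschkeF a z * blaschkeF a z) hBF2
    refine ⟨b, ell1_congr hb fun z => ?_⟩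
    rw [blaschkeProdP, sq, ← Multiset.prod_map_mul]
  set Cb : ℝ := ∑' n, ‖bB n‖ with hCbdef
  have hCb0 : 0 ≤ Cb := tsum_nonneg fun n => norm_nonneg _
  -- Step 2 : choose the cutoff M
  set δ : ℝ := ε ^ 2 / (2 * (Cb + 1) ^ 2) with hδdef
  have hδ0 : 0 < δ := by positivity
  set T : ℝ := ∑' n, ‖cg n‖ ^ 2 with hTdef
  obtain ⟨M, hM⟩ : ∃ M, T - ∑ n ∈ Finset.range M, ‖cg n‖ ^ 2 < δ := by
    have h1 := hgsq.hasSum.tendsto_sum_nat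
    obtain ⟨M, hM⟩ := (Metric.tendsto_atTop.mp h1) δ hδ0
    refine ⟨M, ?_⟩
    have := hM M le_rfl
    rw [Real.dist_eq, abs_sub_lt_iff] at this
    linarith [this.2]
  -- Step 3 : the polynomial approximant h
  set hN : Polynomial ℂ := ∑ n ∈ Finset.range M, Polynomial.C (cg n) * X ^ n with hhN
  have hHz : ∀ z : ℂ, hN.eval z = ∑ n ∈ Finset.range M, cg n * z ^ n := by
    intro z; rw [hhN, Polynomial.eval_finset_sum]; simp
  -- the tail coefficients
  set c' : ℕ → ℂ := fun n => if n < M then 0 else cg n with hc'def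
  have hc'sq : Summable fun n => ‖c' n‖ ^ 2 := by
    refine Summable.of_nonneg_of_le (fun n => sq_nonneg _) (fun n => ?_) hgsq
    by_cases hn : n < M <;> simp [hc'def, hn, sq_nonneg]
  have hc'val : ∑' n, ‖c' n‖ ^ 2 < δ := by
    have hsplit := (Summable.sum_add_tsum_nat_add M hc'sq).symm
    have h0 : ∑ n ∈ Finset.range M, ‖c' n‖ ^ 2 = 0 := by
      refine Finset.sum_eq_zero fun n hn => ?_
      simp [hc'def, Finset.mem_range.mp hn]
    have heq : ∑' k, ‖c' (k + M)‖ ^ 2 = ∑' k, ‖cg (k + M)‖ ^ 2 := by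
      congr 1
      funext k
      simp [hc'def, Nat.not_lt.mpr (Nat.le_add_left M k)]
    have htail : ∑' k, ‖cg (k + M)‖ ^ 2 = T - ∑ n ∈ Finset.range M, ‖cg n‖ ^ 2 := by
      have := Summable.sum_add_tsum_nat_add M hgsq
      rw [hTdef]; linarith
    rw [hsplit, h0, zero_add, heq, htail]
    exact hM
  -- tail has-sum
  have htailsum : ∀ z ∈ Metric.ball (0 : ℂ) 1,
      HasSum (fun n => c' n * z ^ n) (g z - hN.eval z) := by
    intro z hz
    have h1 := hgsum z hz
    have h2 : HasSum (fun n => if n < M then cg n * z ^ n else 0) (hN.eval z) := by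
      have h3 := hasSum_sum_of_ne_finset_zero (s := Finset.range M)
        (f := fun n => if n < M then cg n * z ^ n else 0) (L := SummationFilter.unconditional ℕ)
        (fun n hn => if_neg (by simpa using hn))
      convert h3 using 1
      rw [hHz z]
      exact Finset.sum_congr rfl fun n hn => (if_pos (Finset.mem_range.mp hn)).symm
    have h3 := h1.sub h2
    have h4 : (fun n => cg n * z ^ n - if n < M then cg n * z ^ n else 0) =
        fun n => c' n * z ^ n := by
      funext n
      by_cases hn : n < M <;> simp [hc'def, hn]
    rwa [h4] at h3
  -- Step 4 : the coefficients d of B² (g - h)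
  set d : ℕ → ℂ := fun n => ∑ k ∈ Finset.range (n + 1), bB k * c' (n - k) with hddef
  have hdsum : ∀ z ∈ Metric.ball (0 : ℂ) 1,
      HasSum (fun n => d n * z ^ n) ((blaschkeProdP q z) ^ 2 * (g z - hN.eval z)) := by
    intro z hz
    have hz1 : ‖z‖ < 1 := by simpa using hz
    have hf := summable_norm_term hbB.2 hz
    have hgnorm : Summable fun n => ‖c' n * z ^ n‖ := by
      have hbound : ∀ n, ‖c' n‖ ≤ Real.sqrt (∑' m, ‖c' m‖ ^ 2) := by
        intro n
        have hle : ‖c' n‖ ^ 2 ≤ ∑' m, ‖c' m‖ ^ 2 :=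
          Summable.le_tsum hc'sq n fun _ _ => sq_nonneg _
        calc ‖c' n‖ = Real.sqrt (‖c' n‖ ^ 2) := (Real.sqrt_sq (norm_nonneg _)).symm
          _ ≤ _ := Real.sqrt_le_sqrt hle
      refine Summable.of_nonneg_of_le (fun n => norm_nonneg _) (fun n => ?_)
        (((summable_geometric_of_lt_one (norm_nonneg z) hz1)).mul_left
          (Real.sqrt (∑' m, ‖c' m‖ ^ 2)))
      rw [norm_mul, norm_pow]
      exact mul_le_mul_of_nonneg_right (hbound n) (pow_nonneg (norm_nonneg _) _)
    have H := hasSum_sum_range_mul_of_summable_norm hf hgnorm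
    rw [(hbB.1 z hz).tsum_eq, (htailsum z hz).tsum_eq] at H
    convert H using 2 with n
    · rfl
    rw [hddef, Finset.sum_mul]
    refine Finset.sum_congr rfl fun k hk => ?_
    have hk' : k ≤ n := Nat.lt_succ_iff.mp (Finset.mem_range.mp hk)
    rw [mul_mul_mul_comm, ← pow_add, Nat.add_sub_cancel' hk']
  obtain ⟨hd2, hdle⟩ := cauchy_l2 hbB.2 hc'sq
  -- Step 5 : the function F
  set PF2 : Polynomial ℂ := Polynomial.C ((q.leadingCoeff ^ 2)⁻¹) *
      (p * (2 * q.derivative * hN * Dpoly q + q * hN.derivative * Dpoly q -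
        2 * q * hN * (Dpoly q).derivative)) with hPF2
  obtain ⟨bD, hbD⟩ : ∃ b, Ell1 (fun z => (((Dpoly q).eval z)⁻¹) ^ 3) b := by
    have hgeo3 : ∀ a ∈ q.roots,
        ∃ b, Ell1 (fun z => ((1 - (starRingEnd ℂ) a * z)⁻¹) ^ 3) b := by
      intro a ha
      have hg1 := ell1_geom (hroots a ha)
      exact ⟨_, ell1_congr (ell1_mul (ell1_mul hg1 hg1) hg1) fun z => by ring⟩
    obtain ⟨b, hb⟩ := ell1_multiset_prod q.roots _ hgeo3
    refine ⟨b, ell1_congr hb fun z => ?_⟩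
    rw [Dpoly_eval, ← Multiset.prod_map_inv, ← Multiset.prod_map_pow]
  have hFell : Ell1 (fun z => PF2.eval z * (((Dpoly q).eval z)⁻¹) ^ 3) _ :=
    ell1_mul (ell1_poly PF2) hbD
  -- Conclusion
  refine ⟨fun z => hN.eval z, fun n => hN.coeff n, ell1_isHardy2 (ell1_poly hN),
    ⟨fun z => PF2.eval z * (((Dpoly q).eval z)⁻¹) ^ 3, _, ell1_isHardy2 hFell, ?_⟩,
    d, ⟨hdsum, hd2⟩, ?_⟩
  · intro z hz hqz
    exact deriv_identity hq p hN (Dpoly_eval_ne_zero hroots hz) hqz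
  · rw [Real.sqrt_lt' hε]
    calc ∑' n, ‖d n‖ ^ 2 ≤ Cb ^ 2 * ∑' n, ‖c' n‖ ^ 2 := hdle
      _ ≤ (Cb + 1) ^ 2 * ∑' n, ‖c' n‖ ^ 2 := by
          have h0 : 0 ≤ ∑' n, ‖c' n‖ ^ 2 := tsum_nonneg fun n => sq_nonneg _
          have : Cb ^ 2 ≤ (Cb + 1) ^ 2 := by nlinarith
          exact mul_le_mul_of_nonneg_right this h0
      _ < (Cb + 1) ^ 2 * δ := by
          have hpos : (0 : ℝ) < (Cb + 1) ^ 2 := by positivity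
          exact (mul_lt_mul_iff_right₀ hpos).mpr hc'val
      _ = ε ^ 2 / 2 := by
          rw [hδdef]; field_simp
      _ < ε ^ 2 := by nlinarith
end

section
/- Let T > 0 and let θ : [0,T] → 𝔻 be continuous. Then the linear functional on the Hardy space H²(𝔻) given by g ↦ ∫₀ᵀ g(θ(t)) dt is bounded: there exists a constant C ≥ 0 such that |∫₀ᵀ g(θ(t)) dt| ≤ C·‖g‖_{H²} for every g ∈ H²(𝔻). Consequently there exists a unique Γ_θ ∈ H²(𝔻) (the occupation kernel of θ) with ∫₀ᵀ g(θ(t)) dt = ⟨g, Γ_θ⟩_{H²} for all g ∈ H²(𝔻). -/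
open Complex Metric

/-- Cauchy–Schwarz for infinite sums of nonnegative reals. -/
lemma cs_tsum {f g : ℕ → ℝ} (hf0 : ∀ n, 0 ≤ f n) (hg0 : ∀ n, 0 ≤ g n)
    (hf : Summable fun n => f n ^ 2) (hg : Summable fun n => g n ^ 2) :
    Summable (fun n => f n * g n) ∧
      ∑' n, f n * g n ≤ Real.sqrt (∑' n, f n ^ 2) * Real.sqrt (∑' n, g n ^ 2) := by
  have key : ∀ u : Finset ℕ, ∑ n ∈ u, f n * g n ≤
      Real.sqrt (∑' n, f n ^ 2) * Real.sqrt (∑' n, g n ^ 2) := by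
    intro u
    have h1 := Finset.sum_mul_sq_le_sq_mul_sq u f g
    have h2 : ∑ n ∈ u, f n ^ 2 ≤ ∑' n, f n ^ 2 := Summable.sum_le_tsum u (fun n _ => sq_nonneg _) hf
    have h3 : ∑ n ∈ u, g n ^ 2 ≤ ∑' n, g n ^ 2 := Summable.sum_le_tsum u (fun n _ => sq_nonneg _) hg
    have h4 : (∑ n ∈ u, f n * g n) ^ 2 ≤ (∑' n, f n ^ 2) * (∑' n, g n ^ 2) :=
      h1.trans (mul_le_mul h2 h3 (Finset.sum_nonneg fun n _ => sq_nonneg _)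
        ((Finset.sum_nonneg fun n _ => sq_nonneg _).trans h2))
    have h5 : ∑ n ∈ u, f n * g n ≤ Real.sqrt ((∑' n, f n ^ 2) * (∑' n, g n ^ 2)) := by
      calc ∑ n ∈ u, f n * g n
          = Real.sqrt ((∑ n ∈ u, f n * g n) ^ 2) :=
            (Real.sqrt_sq (Finset.sum_nonneg fun n _ => mul_nonneg (hf0 n) (hg0 n))).symm
        _ ≤ _ := Real.sqrt_le_sqrt h4
    rwa [Real.sqrt_mul (tsum_nonneg fun n => sq_nonneg _)] at h5
  have hs : Summable (fun n => f n * g n) :=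
    summable_of_sum_le (fun n => mul_nonneg (hf0 n) (hg0 n)) key
  exact ⟨hs, Summable.tsum_le_of_sum_le hs key⟩

/-- for a continuous signal `θ : [0,T] → 𝔻`, the functional
`g ↦ ∫₀ᵀ g(θ(t)) dt` is bounded on `H²(𝔻)`, and hence there is a unique occupation
kernel `Γ_θ ∈ H²(𝔻)` (given by its coefficient sequence) with
`∫₀ᵀ g(θ(t)) dt = ⟨g, Γ_θ⟩_{H²}` for all `g ∈ H²(𝔻)`. -/
theorem stmt3 (T : ℝ) (hT : 0 < T) (θ : ℝ → ℂ)
    (hθc : ContinuousOn θ (Set.Icc 0 T))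
    (hθd : ∀ t ∈ Set.Icc (0 : ℝ) T, ‖θ t‖ < 1) :
    (∃ C : ℝ, 0 ≤ C ∧ ∀ (g : ℂ → ℂ) (cg : ℕ → ℂ), IsHardy2 g cg →
        ‖∫ t in (0 : ℝ)..T, g (θ t)‖ ≤ C * Real.sqrt (∑' n, ‖cg n‖ ^ 2)) ∧
    (∃! Γ : ℕ → ℂ, Summable (fun n => ‖Γ n‖ ^ 2) ∧
        ∀ (g : ℂ → ℂ) (cg : ℕ → ℂ), IsHardy2 g cg →
          (∫ t in (0 : ℝ)..T, g (θ t)) = ∑' n, cg n * (starRingEnd ℂ) (Γ n)) := by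
  -- find a uniform radius r < 1
  obtain ⟨t₀, ht₀, hmax⟩ :=
    isCompact_Icc.exists_isMaxOn ⟨0, le_refl (0:ℝ), hT.le⟩ hθc.norm
  set r : ℝ := ‖θ t₀‖ with hr
  have hr0 : 0 ≤ r := norm_nonneg _
  have hr1 : r < 1 := hθd t₀ ht₀
  have hbound : ∀ t ∈ Set.Icc (0:ℝ) T, ‖θ t‖ ≤ r := fun t ht => hmax ht
  -- geometric series facts
  have hgeo2 : Summable (fun n : ℕ => (r ^ n) ^ 2) := by
    have : Summable (fun n : ℕ => (r ^ 2) ^ n) :=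
      summable_geometric_of_lt_one (sq_nonneg r) (by nlinarith)
    simpa [← pow_mul, mul_comm 2] using this
  set K : ℝ := Real.sqrt (∑' n : ℕ, (r ^ n) ^ 2) with hK
  have hK0 : 0 ≤ K := Real.sqrt_nonneg _
  -- key estimates for a Hardy function
  have main : ∀ (cg : ℕ → ℂ), Summable (fun n => ‖cg n‖ ^ 2) →
      Summable (fun n => ‖cg n‖ * r ^ n) ∧
        ∑' n, ‖cg n‖ * r ^ n ≤ Real.sqrt (∑' n, ‖cg n‖ ^ 2) * K := by
    intro cg hcg
    exact cs_tsum (fun n => norm_nonneg _) (fun n => pow_nonneg hr0 n) hcg hgeo2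
  have hpt : ∀ (g : ℂ → ℂ) (cg : ℕ → ℂ), IsHardy2 g cg →
      ∀ t ∈ Set.Icc (0:ℝ) T, ‖g (θ t)‖ ≤ ∑' n, ‖cg n‖ * r ^ n := by
    intro g cg hg t ht
    have hz : θ t ∈ Metric.ball (0:ℂ) 1 := by
      simpa [Metric.mem_ball, Complex.dist_eq] using hθd t ht
    have hsum := hg.1 (θ t) hz
    have hle : ∀ n, ‖cg n * θ t ^ n‖ ≤ ‖cg n‖ * r ^ n := by
      intro n
      rw [norm_mul, norm_pow]
      exact mul_le_mul_of_nonneg_left (pow_le_pow_left₀ (norm_nonneg _) (hbound t ht) n)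
        (norm_nonneg _)
    have hsn : Summable (fun n => ‖cg n * θ t ^ n‖) :=
      Summable.of_nonneg_of_le (fun n => norm_nonneg _) hle (main cg hg.2).1
    calc ‖g (θ t)‖ = ‖∑' n, cg n * θ t ^ n‖ := by rw [hsum.tsum_eq]
      _ ≤ ∑' n, ‖cg n * θ t ^ n‖ := norm_tsum_le_tsum_norm hsn
      _ ≤ ∑' n, ‖cg n‖ * r ^ n := Summable.tsum_le_tsum hle hsn (main cg hg.2).1
  constructor
  · -- boundedness
    refine ⟨K * T, mul_nonneg hK0 hT.le, ?_⟩
    intro g cg hg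
    have h1 : ∀ t ∈ Set.uIoc (0:ℝ) T, ‖g (θ t)‖ ≤ ∑' n, ‖cg n‖ * r ^ n := by
      intro t ht
      refine hpt g cg hg t ?_
      rw [Set.uIoc_of_le hT.le] at ht
      exact ⟨ht.1.le, ht.2⟩
    have h2 := intervalIntegral.norm_integral_le_of_norm_le_const h1
    rw [sub_zero, abs_of_pos hT] at h2
    calc ‖∫ t in (0:ℝ)..T, g (θ t)‖ ≤ (∑' n, ‖cg n‖ * r ^ n) * T := h2
      _ ≤ (Real.sqrt (∑' n, ‖cg n‖ ^ 2) * K) * T :=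
          mul_le_mul_of_nonneg_right (main cg hg.2).2 hT.le
      _ = K * T * Real.sqrt (∑' n, ‖cg n‖ ^ 2) := by ring
  · -- the occupation kernel
    set Γ : ℕ → ℂ := fun n => (starRingEnd ℂ) (∫ t in (0:ℝ)..T, θ t ^ n) with hΓdef
    have hΓconj : ∀ n, (starRingEnd ℂ) (Γ n) = ∫ t in (0:ℝ)..T, θ t ^ n := by
      intro n; simp [hΓdef]
    have hint : ∀ n : ℕ, IntervalIntegrable (fun t => θ t ^ n) MeasureTheory.volume 0 T := by
      intro n
      apply ContinuousOn.intervalIntegrable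
      rw [Set.uIcc_of_le hT.le]
      exact hθc.pow n
    have hΓle : ∀ n, ‖Γ n‖ ≤ r ^ n * T := by
      intro n
      have h1 : ∀ t ∈ Set.uIoc (0:ℝ) T, ‖θ t ^ n‖ ≤ r ^ n := by
        intro t ht
        rw [Set.uIoc_of_le hT.le] at ht
        rw [norm_pow]
        exact pow_le_pow_left₀ (norm_nonneg _) (hbound t ⟨ht.1.le, ht.2⟩) n
      have h2 := intervalIntegral.norm_integral_le_of_norm_le_const h1
      rw [sub_zero, abs_of_pos hT] at h2
      calc ‖Γ n‖ = ‖∫ t in (0:ℝ)..T, θ t ^ n‖ := by rw [hΓdef]; exact RCLike.norm_conj _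
        _ ≤ r ^ n * T := h2
    have hΓsum : Summable (fun n => ‖Γ n‖ ^ 2) := by
      refine Summable.of_nonneg_of_le (fun n => sq_nonneg _) (fun n => ?_)
        (hgeo2.mul_right (T ^ 2))
      calc ‖Γ n‖ ^ 2 ≤ (r ^ n * T) ^ 2 :=
            pow_le_pow_left₀ (norm_nonneg _) (hΓle n) 2
        _ = (r ^ n) ^ 2 * T ^ 2 := by ring
    have hΓrep : ∀ (g : ℂ → ℂ) (cg : ℕ → ℂ), IsHardy2 g cg →
        (∫ t in (0:ℝ)..T, g (θ t)) = ∑' n, cg n * (starRingEnd ℂ) (Γ n) := by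
      intro g cg hg
      have hEq : Set.EqOn (fun t => g (θ t)) (fun t => ∑' n, cg n * θ t ^ n)
          (Set.uIcc 0 T) := by
        intro t ht
        rw [Set.uIcc_of_le hT.le] at ht
        have hz : θ t ∈ Metric.ball (0:ℂ) 1 := by
          simpa [Metric.mem_ball, Complex.dist_eq] using hθd t ht
        exact ((hg.1 (θ t) hz).tsum_eq).symm
      rw [intervalIntegral.integral_congr hEq, intervalIntegral.integral_of_le hT.le]
      have hmeas : ∀ n : ℕ, MeasureTheory.AEStronglyMeasurable (fun t => cg n * θ t ^ n)
          (MeasureTheory.volume.restrict (Set.Ioc 0 T)) := by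
        intro n
        exact (continuousOn_const.mul ((hθc.mono Set.Ioc_subset_Icc_self).pow n)
          ).aestronglyMeasurable measurableSet_Ioc
      have hfin : ∑' n, ∫⁻ t in Set.Ioc (0:ℝ) T, ‖cg n * θ t ^ n‖₊ ≠ ⊤ := by
        have hb : ∀ n : ℕ, ∫⁻ t in Set.Ioc (0:ℝ) T, ‖cg n * θ t ^ n‖₊ ≤
            ((‖cg n‖₊ * ‖θ t₀‖₊ ^ n : NNReal) : ENNReal) * ENNReal.ofReal T := by
          intro n
          have h1 : ∀ t ∈ Set.Ioc (0:ℝ) T, (‖cg n * θ t ^ n‖₊ : ENNReal) ≤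
              ((‖cg n‖₊ * ‖θ t₀‖₊ ^ n : NNReal) : ENNReal) := by
            intro t ht
            have h2 : ‖θ t‖₊ ≤ ‖θ t₀‖₊ := hbound t ⟨ht.1.le, ht.2⟩
            have : ‖cg n * θ t ^ n‖₊ ≤ ‖cg n‖₊ * ‖θ t₀‖₊ ^ n := by
              rw [nnnorm_mul, nnnorm_pow]
              exact mul_le_mul_of_nonneg_left (pow_le_pow_left₀ zero_le h2 n) zero_le
            exact_mod_cast this
          calc ∫⁻ t in Set.Ioc (0:ℝ) T, ‖cg n * θ t ^ n‖₊ ≤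
              ∫⁻ _ in Set.Ioc (0:ℝ) T, ((‖cg n‖₊ * ‖θ t₀‖₊ ^ n : NNReal) : ENNReal) :=
                MeasureTheory.setLIntegral_mono' measurableSet_Ioc h1
            _ = ((‖cg n‖₊ * ‖θ t₀‖₊ ^ n : NNReal) : ENNReal) * ENNReal.ofReal T := by
                rw [MeasureTheory.setLIntegral_const, Real.volume_Ioc, sub_zero]
        refine ne_top_of_le_ne_top ?_ (ENNReal.tsum_le_tsum hb)
        rw [ENNReal.tsum_mul_right]
        refine ENNReal.mul_ne_top ?_ ENNReal.ofReal_ne_top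
        rw [ENNReal.tsum_coe_ne_top_iff_summable, ← NNReal.summable_coe]
        have heq : (fun n : ℕ => ((‖cg n‖₊ * ‖θ t₀‖₊ ^ n : NNReal) : ℝ)) =
            fun n => ‖cg n‖ * r ^ n := by
          funext n; push_cast; rfl
        rw [heq]
        exact (main cg hg.2).1
      rw [MeasureTheory.integral_tsum hmeas hfin]
      refine tsum_congr fun n => ?_
      rw [MeasureTheory.integral_const_mul, hΓconj n, intervalIntegral.integral_of_le hT.le]
    have hmono : ∀ (Γ' : ℕ → ℂ), (∀ (g : ℂ → ℂ) (cg : ℕ → ℂ), IsHardy2 g cg →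
        (∫ t in (0:ℝ)..T, g (θ t)) = ∑' n, cg n * (starRingEnd ℂ) (Γ' n)) →
        ∀ n, (starRingEnd ℂ) (Γ' n) = ∫ t in (0:ℝ)..T, θ t ^ n := by
      intro Γ' hrep n
      set cg : ℕ → ℂ := fun k => if k = n then 1 else 0 with hcg
      have hH : IsHardy2 (fun z => z ^ n) cg := by
        constructor
        · intro z _
          have h : (fun k => cg k * z ^ k) = fun k => if k = n then z ^ n else 0 := by
            funext k
            by_cases hk : k = n <;> simp [hcg, hk]
          rw [h]
          exact hasSum_ite_eq n _
        · have h : (fun k => ‖cg k‖ ^ 2) = fun k => if k = n then (1:ℝ) else 0 := by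
            funext k
            by_cases hk : k = n <;> simp [hcg, hk]
          rw [h]
          exact (hasSum_ite_eq n (1:ℝ)).summable
      have h1 := hrep (fun z => z ^ n) cg hH
      have h2 : ∑' k, cg k * (starRingEnd ℂ) (Γ' k) = (starRingEnd ℂ) (Γ' n) := by
        rw [tsum_eq_single n (fun k hk => by simp [hcg, hk])]
        simp [hcg]
      rw [h2] at h1
      exact h1.symm
    refine ⟨Γ, ⟨hΓsum, hΓrep⟩, ?_⟩
    intro Γ' hΓ'
    funext n
    have h := (hmono Γ' hΓ'.2 n).trans (hmono Γ hΓrep n).symm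
    have := congrArg (starRingEnd ℂ) h
    simpa using this
end

section
/- Let T > 0, let θ : [0,T] → 𝔻 be continuous, and let f be continuous on the range of θ. Define G(z) = ∫₀ᵀ conj(f(θ(t)))·z/(1−conj(θ(t))·z)² dt for z ∈ 𝔻 (so that G = ∫₀ᵀ conj(f(θ(t)))·K_{θ(t)}^{[1]} dt). Then G belongs to the Hardy space H²(𝔻), and for every h ∈ H²(𝔻), ⟨h, G⟩_{H²} = ∫₀ᵀ f(θ(t))·h′(θ(t)) dt. -/
open Complex Metric

lemma kernel_hasSum {w z : ℂ} (hw : ‖w‖ < 1) (hz : ‖z‖ < 1) :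
    HasSum (fun n : ℕ => (n : ℂ) * w ^ (n - 1) * z ^ n) (z / (1 - w * z) ^ 2) := by
  have hx : ‖w * z‖ < 1 := by
    calc ‖w * z‖ = ‖w‖ * ‖z‖ := norm_mul _ _
    _ ≤ ‖w‖ * 1 := by nlinarith [norm_nonneg w, norm_nonneg z]
    _ < 1 := by nlinarith
  have h1 : (1 : ℂ) - w * z ≠ 0 := by
    intro h
    have h2 : ‖(1 : ℂ) - w * z‖ = 0 := by rw [h]; simp
    have h3 : (1:ℝ) - ‖w * z‖ ≤ ‖(1 : ℂ) - w * z‖ := by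
      have := norm_sub_norm_le (1 : ℂ) (w * z)
      simpa using this
    rw [h2] at h3; linarith
  have A := hasSum_coe_mul_geometric_of_norm_lt_one hx
  have B := hasSum_geometric_of_norm_lt_one hx
  have C := (A.add B).mul_left z
  have key : z * (w * z / (1 - w * z) ^ 2 + (1 - w * z)⁻¹) = z / (1 - w * z) ^ 2 := by
    field_simp
    ring
  rw [key] at C
  have C'' : HasSum (fun n : ℕ => (((n+1 : ℕ)) : ℂ) * w ^ ((n+1) - 1) * z ^ (n+1))
      (z / (1 - w * z) ^ 2) := by
    convert C using 1
    · rfl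
    funext n
    rw [Nat.add_sub_cancel, mul_pow]
    push_cast
    ring
  have D := (hasSum_nat_add_iff (f := fun n : ℕ => (n : ℂ) * w ^ (n - 1) * z ^ n) 1).mp C''
  simpa using D

open MeasureTheory in
/-- for a continuous signal `θ : [0,T] → 𝔻` and `f` continuous on the
range of `θ`, the function `G(z) = ∫₀ᵀ conj(f(θ(t))) · z/(1 − conj(θ(t)) z)² dt`
(i.e. `G = ∫₀ᵀ conj(f(θ(t))) K_{θ(t)}^{[1]} dt`) belongs to `H²(𝔻)` and satisfies
`⟨h, G⟩_{H²} = ∫₀ᵀ f(θ(t)) h′(θ(t)) dt` for every `h ∈ H²(𝔻)`. -/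
theorem stmt9 (T : ℝ) (hT : 0 < T) (θ : ℝ → ℂ)
    (hθc : ContinuousOn θ (Set.Icc 0 T))
    (hθd : ∀ t ∈ Set.Icc (0 : ℝ) T, ‖θ t‖ < 1)
    (f : ℂ → ℂ) (hf : ContinuousOn f (θ '' Set.Icc 0 T)) :
    ∃ cG : ℕ → ℂ,
      IsHardy2 (fun z => ∫ t in (0 : ℝ)..T,
          (starRingEnd ℂ) (f (θ t)) * (z / (1 - (starRingEnd ℂ) (θ t) * z) ^ 2)) cG ∧
      ∀ (h : ℂ → ℂ) (ch : ℕ → ℂ), IsHardy2 h ch →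
        (∑' m, ch m * (starRingEnd ℂ) (cG m)) =
          ∫ t in (0 : ℝ)..T, f (θ t) * deriv h (θ t) := by
  have hIcc : IsCompact (Set.Icc (0:ℝ) T) := isCompact_Icc
  have hne : (Set.Icc (0:ℝ) T).Nonempty := ⟨0, by simp [hT.le]⟩
  obtain ⟨t₀, ht₀, hmax⟩ := hIcc.exists_isMaxOn hne hθc.norm
  set r : ℝ := ‖θ t₀‖ with hr_def
  have hr1 : r < 1 := hθd t₀ ht₀
  have hr0 : 0 ≤ r := norm_nonneg _
  set ρ : ℝ := (1 + r) / 2 with hρ_def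
  have hρ0 : 0 < ρ := by positivity
  have hρ1 : ρ < 1 := by rw [hρ_def]; linarith
  have hrρ : r < ρ := by rw [hρ_def]; linarith
  have hθρ : ∀ t ∈ Set.Icc (0:ℝ) T, ‖θ t‖ ≤ ρ := fun t ht => le_trans (hmax ht) hrρ.le
  have hfθ : ContinuousOn (fun t => f (θ t)) (Set.Icc 0 T) :=
    hf.comp hθc (Set.mapsTo_image θ _)
  obtain ⟨M₀, hM₀⟩ := hIcc.exists_bound_of_continuousOn hfθ
  set M : ℝ := max M₀ 0 with hM_def
  have hM0 : 0 ≤ M := le_max_right _ _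
  have hM : ∀ t ∈ Set.Icc (0:ℝ) T, ‖f (θ t)‖ ≤ M := fun t ht =>
    (hM₀ t ht).trans (le_max_left _ _)
  have hu : Summable (fun n : ℕ => (n:ℝ) * ρ^(n-1)) := by
    have h1 : Summable (fun n : ℕ => (n:ℝ)^1 * ρ^n) :=
      summable_pow_mul_geometric_of_norm_lt_one 1 (by rwa [Real.norm_of_nonneg hρ0.le])
    have := h1.mul_left (1/ρ)
    refine this.congr fun n => ?_
    cases n with
    | zero => simp
    | succ m =>
      rw [Nat.add_sub_cancel, pow_succ]
      field_simp
      ring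
  have hu2 : Summable (fun n : ℕ => ((n:ℝ) * ρ^(n-1))^2) := by
    have hρ2 : ‖ρ^2‖ < 1 := by
      rw [Real.norm_of_nonneg (by positivity)]
      nlinarith
    have := (summable_pow_mul_geometric_of_norm_lt_one 2 hρ2).mul_left (1/ρ^2)
    refine this.congr fun n => ?_
    cases n with
    | zero => simp
    | succ m =>
      rw [Nat.add_sub_cancel]
      have h2 : (ρ^2)^(m+1) = (ρ^m)^2 * ρ^2 := by
        rw [← pow_mul, ← pow_mul, ← pow_add]
        congr 1
        ring
      rw [h2]
      field_simp
  set cG : ℕ → ℂ := fun n =>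
    ∫ t in Set.Ioc (0:ℝ) T, (starRingEnd ℂ) (f (θ t)) * ((n:ℂ) * ((starRingEnd ℂ) (θ t))^(n-1))
    with hcG_def
  have hcont : ∀ n : ℕ, ContinuousOn
      (fun t => (starRingEnd ℂ) (f (θ t)) * ((n:ℂ) * ((starRingEnd ℂ) (θ t))^(n-1)))
      (Set.Icc 0 T) := fun n =>
    (continuous_conj.comp_continuousOn hfθ).mul
      (continuousOn_const.mul ((continuous_conj.comp_continuousOn hθc).pow _))
  have hInt : ∀ n : ℕ, IntegrableOn
      (fun t => (starRingEnd ℂ) (f (θ t)) * ((n:ℂ) * ((starRingEnd ℂ) (θ t))^(n-1)))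
      (Set.Ioc 0 T) := fun n =>
    ((hcont n).integrableOn_Icc).mono_set Set.Ioc_subset_Icc_self
  have hbnd : ∀ (n : ℕ) (t : ℝ), t ∈ Set.Icc (0:ℝ) T →
      ‖(starRingEnd ℂ) (f (θ t)) * ((n:ℂ) * ((starRingEnd ℂ) (θ t))^(n-1))‖
        ≤ M * ((n:ℝ) * ρ^(n-1)) := by
    intro n t ht
    rw [norm_mul, norm_mul, norm_pow]
    have h1 : ‖(starRingEnd ℂ) (f (θ t))‖ ≤ M := by
      rw [RCLike.norm_conj]; exact hM t ht
    have h2 : ‖(starRingEnd ℂ) (θ t)‖ ^ (n-1) ≤ ρ^(n-1) := by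
      apply pow_le_pow_left₀ (norm_nonneg _)
      rw [RCLike.norm_conj]
      exact hθρ t ht
    have h3 : ‖(n:ℂ)‖ = (n:ℝ) := by simp
    rw [h3]
    apply mul_le_mul h1 _ (by positivity) hM0
    exact mul_le_mul_of_nonneg_left h2 (Nat.cast_nonneg n)
  have hvol : volume (Set.Ioc (0:ℝ) T) < ⊤ := by
    rw [Real.volume_Ioc]; exact ENNReal.ofReal_lt_top
  have hcGbnd : ∀ n : ℕ, ‖cG n‖ ≤ M * ((n:ℝ) * ρ^(n-1)) * T := by
    intro n
    calc ‖cG n‖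
        ≤ (M * ((n:ℝ) * ρ^(n-1))) * (volume (Set.Ioc (0:ℝ) T)).toReal := by
          apply norm_setIntegral_le_of_norm_le_const hvol
          · intro t ht
            exact hbnd n t (Set.Ioc_subset_Icc_self ht)
    _ = M * ((n:ℝ) * ρ^(n-1)) * T := by
          rw [Real.volume_Ioc, sub_zero, ENNReal.toReal_ofReal hT.le]
  refine ⟨cG, ⟨?_, ?_⟩, ?_⟩
  · -- HasSum of the power series to G z
    intro z hz
    rw [mem_ball_zero_iff] at hz
    set F : ℕ → ℝ → ℂ := fun n t =>
      (starRingEnd ℂ) (f (θ t)) * ((n:ℂ) * ((starRingEnd ℂ) (θ t))^(n-1)) * z^n with hF_def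
    have hFint : ∀ n, Integrable (F n) (volume.restrict (Set.Ioc 0 T)) := fun n =>
      (hInt n).mul_const _
    have hFbnd : ∀ (n : ℕ) (t : ℝ), t ∈ Set.Ioc (0:ℝ) T →
        ‖F n t‖ ≤ M * ((n:ℝ) * ρ^(n-1)) := by
      intro n t ht
      have h1 := hbnd n t (Set.Ioc_subset_Icc_self ht)
      have h2 : ‖z‖^n ≤ 1 := pow_le_one₀ (norm_nonneg _) hz.le
      calc ‖F n t‖
          = ‖(starRingEnd ℂ) (f (θ t)) * ((n:ℂ) * ((starRingEnd ℂ) (θ t))^(n-1))‖ * ‖z‖^n := by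
            simp only [hF_def, norm_mul, norm_pow]
        _ ≤ (M * ((n:ℝ) * ρ^(n-1))) * 1 :=
            mul_le_mul h1 h2 (by positivity) (by positivity)
        _ = M * ((n:ℝ) * ρ^(n-1)) := mul_one _
    have hFnormint : ∀ n, ∫ t in Set.Ioc (0:ℝ) T, ‖F n t‖ ≤ M * ((n:ℝ) * ρ^(n-1)) * T := by
      intro n
      calc ∫ t in Set.Ioc (0:ℝ) T, ‖F n t‖
          ≤ ∫ _t in Set.Ioc (0:ℝ) T, (M * ((n:ℝ) * ρ^(n-1))) :=
            setIntegral_mono_on (hFint n).norm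
              (integrableOn_const hvol.ne) measurableSet_Ioc
              (fun t ht => hFbnd n t ht)
        _ = M * ((n:ℝ) * ρ^(n-1)) * T := by
            rw [setIntegral_const, measureReal_def, Real.volume_Ioc, sub_zero, ENNReal.toReal_ofReal hT.le,
              smul_eq_mul, mul_comm]
    have hFsum : Summable (fun n => ∫ t in Set.Ioc (0:ℝ) T, ‖F n t‖) :=
      Summable.of_nonneg_of_le (fun n => integral_nonneg fun t => norm_nonneg _)
        hFnormint ((hu.mul_left M).mul_right T)
    have H := hasSum_integral_of_summable_integral_norm hFint hFsum
    have hfun : (fun n => ∫ t in Set.Ioc (0:ℝ) T, F n t) = fun n => cG n * z ^ n := by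
      funext n
      simp only [hcG_def, hF_def]
      rw [← integral_mul_const]
    have hval : (∫ t in Set.Ioc (0:ℝ) T, ∑' n, F n t)
        = ∫ t in (0:ℝ)..T,
            (starRingEnd ℂ) (f (θ t)) * (z / (1 - (starRingEnd ℂ) (θ t) * z) ^ 2) := by
      rw [intervalIntegral.integral_of_le hT.le]
      apply setIntegral_congr_fun measurableSet_Ioc
      intro t ht
      have hw : ‖(starRingEnd ℂ) (θ t)‖ < 1 := by
        rw [RCLike.norm_conj]; exact hθd t (Set.Ioc_subset_Icc_self ht)
      have hk := kernel_hasSum hw hz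
      calc ∑' n, F n t
          = ∑' (n : ℕ), (starRingEnd ℂ) (f (θ t)) *
              ((n:ℂ) * ((starRingEnd ℂ) (θ t))^(n-1) * z^n) := by
            apply tsum_congr; intro n; simp only [hF_def]; ring
        _ = (starRingEnd ℂ) (f (θ t)) * (z / (1 - (starRingEnd ℂ) (θ t) * z) ^ 2) := by
            rw [tsum_mul_left, hk.tsum_eq]
    rw [hfun, hval] at H
    exact H
  · -- summability of squared norms
    apply Summable.of_nonneg_of_le (fun n => by positivity) (fun n => ?_)
      (hu2.mul_left ((M*T)^2))
    calc ‖cG n‖^2 ≤ (M * ((n:ℝ) * ρ^(n-1)) * T)^2 :=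
          pow_le_pow_left₀ (norm_nonneg _) (hcGbnd n) 2
      _ = (M*T)^2 * ((n:ℝ) * ρ^(n-1))^2 := by ring
  · -- the inner product identity
    rintro h ch ⟨hch1, hch2⟩
    set C : ℝ := Real.sqrt (∑' m, ‖ch m‖^2) with hC_def
    have hC0 : 0 ≤ C := Real.sqrt_nonneg _
    have hC : ∀ n, ‖ch n‖ ≤ C := by
      intro n
      have h1 : ‖ch n‖^2 ≤ ∑' m, ‖ch m‖^2 :=
        Summable.le_tsum hch2 n (fun j _ => by positivity)
      have h2 : C^2 = ∑' m, ‖ch m‖^2 :=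
        Real.sq_sqrt (tsum_nonneg fun m => by positivity)
      nlinarith [norm_nonneg (ch n)]
    have hderiv : ∀ t ∈ Set.Icc (0:ℝ) T,
        deriv h (θ t) = ∑' n, ch n * ((n:ℂ) * (θ t)^(n-1)) := by
      intro t ht
      have hθt : θ t ∈ ball (0:ℂ) ρ := by
        rw [mem_ball_zero_iff]; exact lt_of_le_of_lt (hmax ht) hrρ
      have hsum0 : Summable (fun n : ℕ => ch n * (0:ℂ)^n) := by
        apply summable_of_ne_finset_zero (s := {0})
        intro b hb
        simp only [Finset.mem_singleton] at hb
        rw [zero_pow hb, mul_zero]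
      have hD := hasDerivAt_tsum_of_isPreconnected (hu.mul_left C) isOpen_ball
        (convex_ball (0:ℂ) ρ).isPreconnected
        (g := fun n y => ch n * y^n) (g' := fun n y => ch n * ((n:ℂ) * y^(n-1)))
        (fun n y _hy => (hasDerivAt_pow n y).const_mul (ch n))
        (fun n y hy => by
          rw [norm_mul, norm_mul, norm_pow]
          have h3 : ‖(n:ℂ)‖ = (n:ℝ) := by simp
          rw [h3]
          have h4 : ‖y‖^(n-1) ≤ ρ^(n-1) :=
            pow_le_pow_left₀ (norm_nonneg _) (mem_ball_zero_iff.mp hy).le _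
          apply mul_le_mul (hC n) _ (by positivity) hC0
          exact mul_le_mul_of_nonneg_left h4 (Nat.cast_nonneg n))
        (mem_ball_self hρ0) hsum0 hθt
      have hev : h =ᶠ[nhds (θ t)] (fun y => ∑' n, ch n * y^n) := by
        have hmem : θ t ∈ ball (0:ℂ) 1 := by
          rw [mem_ball_zero_iff]; exact hθd t ht
        filter_upwards [isOpen_ball.mem_nhds hmem] with y hy
        exact ((hch1 y hy).tsum_eq).symm
      rw [hev.deriv_eq, hD.deriv]
    have hconj : ∀ m, (starRingEnd ℂ) (cG m)
        = ∫ t in Set.Ioc (0:ℝ) T, f (θ t) * ((m:ℂ) * (θ t)^(m-1)) := by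
      intro m
      simp only [hcG_def]
      rw [← integral_conj]
      refine integral_congr_ae (Filter.Eventually.of_forall fun t => ?_)
      simp [map_mul, map_pow]
    set E : ℕ → ℝ → ℂ := fun m t => ch m * (f (θ t) * ((m:ℂ) * (θ t)^(m-1))) with hE_def
    have hEcont : ∀ m, ContinuousOn (E m) (Set.Icc 0 T) := fun m =>
      continuousOn_const.mul (hfθ.mul (continuousOn_const.mul (hθc.pow _)))
    have hEint : ∀ m, Integrable (E m) (volume.restrict (Set.Ioc 0 T)) := fun m =>
      ((hEcont m).integrableOn_Icc).mono_set Set.Ioc_subset_Icc_self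
    have hEbnd : ∀ (m : ℕ) (t : ℝ), t ∈ Set.Ioc (0:ℝ) T →
        ‖E m t‖ ≤ C * (M * ((m:ℝ) * ρ^(m-1))) := by
      intro m t ht
      have ht' := Set.Ioc_subset_Icc_self ht
      simp only [hE_def, norm_mul, norm_pow]
      have h3 : ‖(m:ℂ)‖ = (m:ℝ) := by simp
      rw [h3]
      apply mul_le_mul (hC m) _ (by positivity) hC0
      apply mul_le_mul (hM t ht') _ (by positivity) hM0
      exact mul_le_mul_of_nonneg_left
        (pow_le_pow_left₀ (norm_nonneg _) (hθρ t ht') _) (Nat.cast_nonneg m)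
    have hEnormint : ∀ m, ∫ t in Set.Ioc (0:ℝ) T, ‖E m t‖
        ≤ C * (M * ((m:ℝ) * ρ^(m-1))) * T := by
      intro m
      calc ∫ t in Set.Ioc (0:ℝ) T, ‖E m t‖
          ≤ ∫ _t in Set.Ioc (0:ℝ) T, (C * (M * ((m:ℝ) * ρ^(m-1)))) :=
            setIntegral_mono_on (hEint m).norm
              (integrableOn_const hvol.ne) measurableSet_Ioc
              (fun t ht => hEbnd m t ht)
        _ = C * (M * ((m:ℝ) * ρ^(m-1))) * T := by
            rw [setIntegral_const, measureReal_def, Real.volume_Ioc, sub_zero, ENNReal.toReal_ofReal hT.le,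
              smul_eq_mul, mul_comm]
    have hEsum : Summable (fun m => ∫ t in Set.Ioc (0:ℝ) T, ‖E m t‖) :=
      Summable.of_nonneg_of_le (fun m => integral_nonneg fun t => norm_nonneg _)
        hEnormint (((hu.mul_left M).mul_left C).mul_right T)
    have H := hasSum_integral_of_summable_integral_norm hEint hEsum
    calc ∑' m, ch m * (starRingEnd ℂ) (cG m)
        = ∑' m, ∫ t in Set.Ioc (0:ℝ) T, E m t := by
          apply tsum_congr; intro m
          rw [hconj m, ← integral_const_mul]
      _ = ∫ t in Set.Ioc (0:ℝ) T, ∑' m, E m t := H.tsum_eq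
      _ = ∫ t in (0:ℝ)..T, f (θ t) * deriv h (θ t) := by
          rw [intervalIntegral.integral_of_le hT.le]
          symm
          apply setIntegral_congr_fun measurableSet_Ioc
          intro t ht
          have ht' := Set.Ioc_subset_Icc_self ht
          calc f (θ t) * deriv h (θ t)
              = f (θ t) * ∑' m, ch m * ((m:ℂ) * (θ t)^(m-1)) := by rw [hderiv t ht']
            _ = ∑' m, f (θ t) * (ch m * ((m:ℂ) * (θ t)^(m-1))) := (tsum_mul_left).symm
            _ = ∑' m, E m t := by
                apply tsum_congr; intro m; simp only [hE_def]; ring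
end

section
/- The point spectrum of the Liouville operator A_{1/z} restricted to z²H² is empty: for every λ ∈ ℂ and every g ∈ H²(𝔻), if (d/dz)(z²g(z)) = λ·z³·g(z) for all z ∈ 𝔻 (equivalently, (1/z)·(z²g)′(z) = λ·z²g(z) for all z ∈ 𝔻 \ {0}), then g is identically zero. -/
open Complex Metric
open scoped NNReal ENNReal

theorem stmt10_aux (g : ℂ → ℂ) (cg : ℕ → ℂ)
    (h1 : ∀ z ∈ Metric.ball (0 : ℂ) 1, HasSum (fun n => cg n * z ^ n) (g z))
    (h2 : Summable (fun n => ‖cg n‖ ^ 2)) :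
    HasFPowerSeriesOnBall g (FormalMultilinearSeries.ofScalars ℂ cg) 0 1 := by
  obtain ⟨C, hC⟩ := (h2.tendsto_atTop_zero.bddAbove_range)
  simp only [upperBounds, Set.mem_range, forall_exists_index] at hC
  refine ⟨?_, one_pos, ?_⟩
  · rw [show (1 : ℝ≥0∞) = ((1 : ℝ≥0) : ℝ≥0∞) by simp]
    apply FormalMultilinearSeries.le_radius_of_bound _ (Real.sqrt C)
    intro n
    rw [FormalMultilinearSeries.ofScalars_norm]
    calc ‖cg n‖ * (1:ℝ≥0) ^ n ≤ ‖cg n‖ := by simp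
      _ = Real.sqrt (‖cg n‖ ^ 2) := by rw [Real.sqrt_sq (norm_nonneg _)]
      _ ≤ Real.sqrt C := Real.sqrt_le_sqrt (hC n rfl)
  · intro y hy
    simp only [EMetric.mem_ball, edist_zero_right, ← ENNReal.coe_one,
      ENNReal.coe_lt_coe, ← NNReal.coe_lt_coe, coe_nnnorm] at hy
    simp only [FormalMultilinearSeries.ofScalars_apply_eq, smul_eq_mul, zero_add]
    rw [ENNReal.coe_one, ← ofReal_norm, ENNReal.ofReal_lt_one] at hy
    exact h1 y (by simpa using hy)

/-- the point spectrum of the Liouville operator `A_{1/z}` restricted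
to `z²H²` is empty: if `g ∈ H²(𝔻)` and `(z²g)′(z) = λ z³ g(z)` on `𝔻`
(equivalently `(1/z)(z²g)′ = λ z²g` off the origin), then `g ≡ 0`. -/
theorem stmt10 (lam : ℂ) (g : ℂ → ℂ) (cg : ℕ → ℂ) (hg : IsHardy2 g cg)
    (heq : ∀ z ∈ ball (0 : ℂ) 1,
      deriv (fun w => w ^ 2 * g w) z = lam * z ^ 3 * g z) :
    ∀ z ∈ ball (0 : ℂ) 1, g z = 0 := by
  have hp := stmt10_aux g cg hg.1 hg.2
  have hmem : ∀ z : ℂ, z ∈ ball (0 : ℂ) 1 → z ∈ Metric.eball (0 : ℂ) 1 := by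
    intro z hz
    simp only [Metric.mem_eball, edist_zero_right, ← ENNReal.coe_one,
      ENNReal.coe_lt_coe, ← NNReal.coe_lt_coe, coe_nnnorm]
    rw [← ofReal_norm, ENNReal.coe_one, ENNReal.ofReal_lt_one]
    simpa using hz
  have gdiff : ∀ z ∈ ball (0 : ℂ) 1, DifferentiableAt ℂ g z := fun z hz =>
    (hp.analyticAt_of_mem (by simpa using hmem z hz)).differentiableAt
  set h : ℂ → ℂ := fun w => w ^ 2 * g w with hh
  have hdh : ∀ z ∈ ball (0 : ℂ) 1, HasDerivAt h (lam * z * h z) z := by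
    intro z hz
    have hd : DifferentiableAt ℂ h z := (differentiableAt_pow 2).mul (gdiff z hz)
    have := hd.hasDerivAt
    rw [hh] at this ⊢
    rw [heq z hz] at this
    convert this using 1
    · rfl
    · rfl
    · ring
  set u : ℂ → ℂ := fun w => Complex.exp (-(lam / 2) * w ^ 2) * h w with hu
  have hdu : ∀ z ∈ ball (0 : ℂ) 1, HasDerivAt u 0 z := by
    intro z hz
    have he : HasDerivAt (fun w : ℂ => Complex.exp (-(lam / 2) * w ^ 2))
        (-(lam / 2) * (2 * z) * Complex.exp (-(lam / 2) * z ^ 2)) z := by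
      have : HasDerivAt (fun w : ℂ => -(lam / 2) * w ^ 2) (-(lam / 2) * (2 * z)) z := by
        simpa using (hasDerivAt_pow 2 z).const_mul (-(lam / 2))
      simpa [mul_comm] using this.cexp
    have := he.mul (hdh z hz)
    convert this using 1
    · rfl
    · rfl
    · rfl
    · ring
  have hconst : ∀ z ∈ ball (0 : ℂ) 1, u z = u 0 := by
    intro z hz
    have hcv : Convex ℝ (ball (0 : ℂ) 1) := convex_ball 0 1
    refine hcv.is_const_of_fderivWithin_eq_zero
      (fun w hw => ((hdu w hw).differentiableAt).differentiableWithinAt) ?_ hz (by simp)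
    intro w hw
    rw [fderivWithin_of_isOpen isOpen_ball hw]
    have := (hdu w hw).hasFDerivAt.fderiv
    rw [this]
    ext
    simp
  have hzero : ∀ z ∈ ball (0 : ℂ) 1, h z = 0 := by
    intro z hz
    have h0 : u 0 = 0 := by simp [hu, hh]
    have := hconst z hz
    rw [h0, hu] at this
    rcases mul_eq_zero.mp this with h' | h'
    · exact absurd h' (Complex.exp_ne_zero _)
    · exact h'
  intro z hz
  rcases eq_or_ne z 0 with rfl | hz0
  · have hc : ContinuousAt g 0 :=
      (hp.analyticAt_of_mem (by simpa using hmem 0 (by simp))).continuousAt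
    have hev : ∀ᶠ w in nhdsWithin (0 : ℂ) {(0:ℂ)}ᶜ, g w = 0 := by
      filter_upwards [self_mem_nhdsWithin,
        mem_nhdsWithin_of_mem_nhds (Metric.ball_mem_nhds (0:ℂ) one_pos)] with w hw hwb
      have := hzero w hwb
      simp only [hh] at this
      rcases mul_eq_zero.mp this with h' | h'
      · exact absurd (pow_eq_zero_iff (by norm_num) |>.mp h') hw
      · exact h'
    have t1 : Filter.Tendsto g (nhdsWithin (0:ℂ) {(0:ℂ)}ᶜ) (nhds (g 0)) :=
      hc.continuousWithinAt.tendsto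
    have t2 : Filter.Tendsto g (nhdsWithin (0:ℂ) {(0:ℂ)}ᶜ) (nhds 0) := by
      rw [Filter.tendsto_congr' hev]; exact tendsto_const_nhds
    exact tendsto_nhds_unique t1 t2
  · have := hzero z hz
    simp only [hh] at this
    rcases mul_eq_zero.mp this with h' | h'
    · exact absurd (pow_eq_zero_iff (by norm_num) |>.mp h') hz0
    · exact h'
end

section
/- Let M be a finite-dimensional complex subspace of the set of analytic functions on 𝔻 such that every h ∈ M is of the form h(z) = z²g(z) for some g ∈ H²(𝔻), and such that M is invariant under A_{1/z}: for every h ∈ M, the function z ↦ h′(z)/z (which extends analytically to all of 𝔻) belongs to M. Then M = {0}. -/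
open Complex Metric

open Filter Topology
lemma hardy_analyticOnNhd {g : ℂ → ℂ} {c : ℕ → ℂ}
    (hsum : ∀ z ∈ Metric.ball (0 : ℂ) 1, HasSum (fun n => c n * z ^ n) (g z))
    (hsq : Summable (fun n => ‖c n‖ ^ 2)) :
    AnalyticOnNhd ℂ g (ball (0:ℂ) 1) := by
  set p := FormalMultilinearSeries.ofScalars ℂ c with hp
  obtain ⟨C, hC⟩ : ∃ C, ∀ n, ‖c n‖ ^ 2 ≤ C := by
    obtain ⟨C, hC⟩ := (hsq.tendsto_atTop_zero.bddAbove_range)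
    exact ⟨C, fun n => hC ⟨n, rfl⟩⟩
  have hbound : ∀ n, ‖c n‖ ≤ max 1 C := by
    intro n
    rcases le_or_gt ‖c n‖ 1 with h | h
    · exact h.trans (le_max_left _ _)
    · have : ‖c n‖ ≤ ‖c n‖ ^ 2 := by nlinarith
      exact this.trans ((hC n).trans (le_max_right _ _))
  have hrad : (1 : ENNReal) ≤ p.radius := by
    apply ENNReal.le_of_forall_nnreal_lt
    intro r hr
    have hr1 : (r : ℝ) < 1 := by exact_mod_cast hr
    apply FormalMultilinearSeries.le_radius_of_summable
    have hg : Summable (fun n : ℕ => max 1 C * (r : ℝ) ^ n) :=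
      (summable_geometric_of_lt_one r.coe_nonneg hr1).mul_left _
    apply Summable.of_nonneg_of_le (fun n => by positivity) _ hg
    intro n
    have : ‖p n‖ = ‖c n‖ := FormalMultilinearSeries.ofScalars_norm ..
    rw [this]
    have := hbound n
    have hrn : (0:ℝ) ≤ (r:ℝ) ^ n := by positivity
    nlinarith
  have hball : HasFPowerSeriesOnBall g p 0 1 := by
    refine ⟨hrad, one_pos, fun {y} hy => ?_⟩
    rw [EMetric.mem_ball, edist_zero_right] at hy
    have hy' : y ∈ ball (0:ℂ) 1 := by
      rw [mem_ball_zero_iff]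
      rw [← ofReal_norm, ENNReal.ofReal_lt_one] at hy
      exact hy
    have := hsum y hy'
    rw [zero_add]
    convert this using 2 with n
    · rfl
    simp only [hp, FormalMultilinearSeries.ofScalars_apply_eq, smul_eq_mul]
  intro z hz
  apply hball.analyticOnNhd
  rw [EMetric.mem_ball, edist_zero_right]
  rw [mem_ball_zero_iff] at hz
  rw [← ofReal_norm, ENNReal.ofReal_lt_one]
  exact hz

lemma ext0 {f g : ℂ → ℂ} (hf : ContinuousAt f 0) (hg : ContinuousAt g 0)
    (h : ∀ᶠ z in 𝓝[≠] (0:ℂ), f z = g z) : f 0 = g 0 := by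
  have hf' := hf.tendsto.mono_left (nhdsWithin_le_nhds (s := {(0:ℂ)}ᶜ))
  have hg' := hg.tendsto.mono_left (nhdsWithin_le_nhds (s := {(0:ℂ)}ᶜ))
  exact tendsto_nhds_unique (hf'.congr' h) hg'


/-- if `M` is a finite-dimensional subspace of functions that, on `𝔻`,
are of the form `z²g` with `g ∈ H²(𝔻)`, and `M` is invariant under `A_{1/z}`
(for each `h ∈ M` the analytic extension of `z ↦ h′(z)/z` belongs to `M`),
then `M = {0}` (as functions on `𝔻`). -/
theorem stmt13 (M : Submodule ℂ (ℂ → ℂ)) (hfin : FiniteDimensional ℂ M)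
    (hmem : ∀ h ∈ M, ∃ (g : ℂ → ℂ) (cg : ℕ → ℂ), IsHardy2 g cg ∧
      ∀ z ∈ ball (0 : ℂ) 1, h z = z ^ 2 * g z)
    (hinv : ∀ h ∈ M, ∃ h' ∈ M, ∀ z ∈ ball (0 : ℂ) 1, z ≠ 0 →
      h' z = deriv h z / z) :
    ∀ h ∈ M, ∀ z ∈ ball (0 : ℂ) 1, h z = 0 := by
  have hball0 : (0:ℂ) ∈ ball (0:ℂ) 1 := mem_ball_self one_pos
  have hA : ∀ h ∈ M, AnalyticOnNhd ℂ h (ball (0:ℂ) 1) := by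
    intro h hM
    obtain ⟨g, cg, ⟨hg1, hg2⟩, heq⟩ := hmem h hM
    have gA := hardy_analyticOnNhd hg1 hg2
    intro w hw
    have h2 : AnalyticAt ℂ (fun z : ℂ => z ^ 2 * g z) w :=
      ((analyticAt_id (𝕜 := ℂ)).pow 2).mul (gA w hw)
    exact h2.congr (Filter.eventuallyEq_of_mem (isOpen_ball.mem_nhds hw)
      (fun z hz => (heq z hz).symm))
  have hzero : ∀ h ∈ M, h 0 = 0 := by
    intro h hM
    obtain ⟨g, cg, _, heq⟩ := hmem h hM
    simpa using heq 0 hball0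
  have key : ∀ n : ℕ, ∀ h, ∀ hM : h ∈ M, ∀ hA0 : AnalyticAt ℂ h 0,
      analyticOrderAt h 0 = (n : ℕ∞) → (∃ z ∈ ball (0:ℂ) 1, h z ≠ 0) → False := by
    intro n
    induction n using Nat.strong_induction_on with
    | _ n IH =>
    intro h hM hA0 horder hex
    obtain ⟨u, uA, u0, hequ⟩ := (hA0.analyticOrderAt_eq_natCast).mp horder
    simp only [sub_zero, smul_eq_mul] at hequ
    match n, IH, hequ with
    | 0, IH, hequ =>
      have : h 0 = u 0 := by simpa using hequ.self_of_nhds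
      rw [hzero h hM] at this
      exact u0 this.symm
    | 1, IH, hequ =>
      obtain ⟨h', hM', hd⟩ := hinv h hM
      have hderiv0 : deriv h 0 = u 0 := by
        have h1 : deriv h 0 = deriv (fun z : ℂ => z * u z) 0 := by
          apply Filter.EventuallyEq.deriv_eq
          simpa [pow_one, Filter.EventuallyEq] using hequ
        rw [h1, deriv_fun_mul (c := fun z : ℂ => z) differentiableAt_id uA.differentiableAt]
        simp
      have hcontd : ContinuousAt (deriv h) 0 :=
        (((hA h hM).deriv) 0 hball0).continuousAt
      have hconth' : ContinuousAt (fun z : ℂ => z * h' z) 0 :=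
        continuousAt_id.mul (hA h' hM' 0 hball0).continuousAt
      have hev : ∀ᶠ z in 𝓝[≠] (0:ℂ), z * h' z = deriv h z := by
        filter_upwards [self_mem_nhdsWithin,
          mem_nhdsWithin_of_mem_nhds (isOpen_ball.mem_nhds hball0)] with z hne hzb
        rw [hd z hzb hne, mul_div_cancel₀ _ hne]
      have := ext0 hconth' hcontd hev
      rw [hderiv0] at this
      simp at this
      exact u0 this.symm
    | (m+2), IH, hequ =>
      obtain ⟨h', hM', hd⟩ := hinv h hM
      have udA : AnalyticAt ℂ (deriv u) 0 := by
        obtain ⟨r, hrpos, hu⟩ := uA.exists_ball_analyticOnNhd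
        exact hu.deriv 0 (mem_ball_self hrpos)
      set v : ℂ → ℂ := fun z => ((m:ℂ)+2) * u z + z * deriv u z with hv
      have vA : AnalyticAt ℂ v 0 :=
        (analyticAt_const.mul uA).add ((analyticAt_id (𝕜 := ℂ)).mul udA)
      have v0 : v 0 ≠ 0 := by
        have h2 : v 0 = ((m:ℂ)+2) * u 0 := by simp [hv]
        rw [h2]
        refine mul_ne_zero ?_ u0
        have : ((m:ℂ)+2) = ((m+2 : ℕ) : ℂ) := by push_cast; ring
        rw [this]
        exact Nat.cast_ne_zero.mpr (by omega)
      have hderiv : ∀ᶠ z in 𝓝 (0:ℂ), deriv h z = z ^ (m+1) * v z := by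
        have h1 := hequ.eventually_nhds
        have h2 := uA.eventually_analyticAt
        filter_upwards [h1, h2] with z hz huz
        have hz' : h =ᶠ[𝓝 z] (fun w : ℂ => w^(m+2) * u w) := hz
        rw [hz'.deriv_eq, deriv_fun_mul (differentiableAt_pow _) huz.differentiableAt,
          deriv_pow_field]
        simp only [hv]
        push_cast
        ring
      have E1 : ∀ᶠ z in 𝓝[≠] (0:ℂ), h' z = z ^ m * v z := by
        filter_upwards [hderiv.filter_mono nhdsWithin_le_nhds, self_mem_nhdsWithin,
          mem_nhdsWithin_of_mem_nhds (isOpen_ball.mem_nhds hball0)] with z hz hne hzb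
        rw [hd z hzb hne, hz]
        have hzz : z ^ (m+1) = z * z ^ m := by ring
        rw [hzz, mul_assoc, mul_div_cancel_left₀ _ hne]
      have h'A : AnalyticAt ℂ h' 0 := hA h' hM' 0 hball0
      have E2 : ∀ᶠ z in 𝓝 (0:ℂ), h' z = z ^ m * v z := by
        have hsub : AnalyticAt ℂ (h' - fun z : ℂ => z ^ m * v z) 0 :=
          h'A.sub (((analyticAt_id (𝕜 := ℂ)).pow m).mul vA)
        have hfreq : ∃ᶠ z in 𝓝[≠] (0:ℂ), (h' - fun z : ℂ => z ^ m * v z) z = 0 :=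
          (E1.mono fun z hz => by simp [hz]).frequently
        have := hsub.frequently_zero_iff_eventually_zero.mp hfreq
        exact this.mono fun z hz => by
          have : h' z - z ^ m * v z = 0 := hz
          linear_combination this
      have horder' : analyticOrderAt h' 0 = (m : ℕ∞) := by
        rw [h'A.analyticOrderAt_eq_natCast]
        exact ⟨v, vA, v0, by simpa [smul_eq_mul] using E2⟩
      have hne' : ∃ z ∈ ball (0:ℂ) 1, h' z ≠ 0 := by
        by_contra hcon
        push_neg at hcon
        have : analyticOrderAt h' 0 = ⊤ := analyticOrderAt_eq_top.mpr
          (Filter.eventually_of_mem (isOpen_ball.mem_nhds hball0) hcon)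
        rw [horder'] at this
        exact (ENat.coe_ne_top m) this
      exact IH m (by omega) h' hM' h'A horder' hne'
  intro h hM z hz
  by_contra hne
  have hA0 := hA h hM 0 hball0
  have hnt : analyticOrderAt h 0 ≠ ⊤ := by
    intro htop
    have hev := analyticOrderAt_eq_top.mp htop
    have := AnalyticOnNhd.eqOn_zero_of_preconnected_of_eventuallyEq_zero (hA h hM)
      (convex_ball (0:ℂ) 1).isPreconnected hball0 hev
    exact hne (this hz)
  obtain ⟨n, hn⟩ := WithTop.ne_top_iff_exists.mp hnt
  exact key n h hM hA0 hn.symm ⟨z, hz, hne⟩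
end
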